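/- arXiv:2510.22027 — 2 statements merged into one kernel-verified Lean document; each statement's English description precedes it below -/
import Mathlib

section
/- Let C > 0, let K and T be positive integers with K ≥ 2, let H > 0 satisfy |b(D) − κ| ≤ H for all D ∈ S, and let ε_off ≥ 0. Suppose D₁,…,D_T ∈ S and λ₁,…,λ_T ∈ Λ_K satisfy: (i) for every t ∈ {1,…,T} and every D ∈ S, L(D, λ_t) ≤ L(D_t, λ_t) + ε_off; and (ii) (EXP3 regret bound) for every λ ∈ Λ_K, ∑_{t=1}^T L(D_t, λ_t) ≤ ∑_{t=1}^T L(D_t, λ) + H·√(2·T·K·ln K). Set D̄ = (1/T)·∑_{t=1}^T D_t and λ̂ = (1/T)·∑_{t=1}^T λ_t, and let λ̄ ∈ Λ_K be any point with |λ̄ − λ̂| ≤ C/K. Then (D̄, λ̄) ∈ S × Λ_K is an ε-approximate minimax equilibrium with ε = ε_off + H·√(2·K·ln K / T) + 2·H·C/K; that is, L(D, λ̄) − ε ≤ L(D̄, λ̄) ≤ L(D̄, λ) + ε for all D ∈ S and all λ ∈ Λ_K. -/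
/-!
Let `V` be the average of `L (D t) (lam t)`. Averaging the best-response inequalities and using
that `L d` is affine gives `L d λ̂ ≤ V + ε_off` for every `d ∈ S`; averaging the regret bound and
using that `L · l` is affine gives `V ≤ L D̄ l + H √(2 K ln K / T)` for every `l ∈ Λ_K`. Since
`|b - κ| ≤ H` on `S`, each `L d` with `d ∈ S` is `H`-Lipschitz, so moving from `λ̂` to `λ̄`
costs at most `H C / K`.
-/

open Finset

noncomputable def lagrangian {E : Type*} [AddCommGroup E] [Module ℝ E] (a b : E →ₗ[ℝ] ℝ)
    (κ : ℝ) (d : E) (l : ℝ) : ℝ :=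
  a d - l * (b d - κ)

section Lagrangian

variable {E ι : Type*} [AddCommGroup E] [Module ℝ E] (a b : E →ₗ[ℝ] ℝ) (κ : ℝ)

theorem lagrangian_sum_smul (s : Finset ι) {w : ι → ℝ} (hw : ∑ i ∈ s, w i = 1)
    (d : ι → E) (l : ℝ) :
    lagrangian a b κ (∑ i ∈ s, w i • d i) l = ∑ i ∈ s, w i * lagrangian a b κ (d i) l := by
  have hterm : ∀ i, w i * lagrangian a b κ (d i) l =
      w i * a (d i) - l * (w i * b (d i)) + l * κ * w i := fun i => by
    simp only [lagrangian]; ring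
  rw [sum_congr rfl fun i _ => hterm i, sum_add_distrib, sum_sub_distrib, ← mul_sum, ← mul_sum,
    hw]
  simp only [lagrangian, map_sum, map_smul, smul_eq_mul]
  ring

theorem lagrangian_sum_mul (s : Finset ι) {w : ι → ℝ} (hw : ∑ i ∈ s, w i = 1)
    (d : E) (l : ι → ℝ) :
    lagrangian a b κ d (∑ i ∈ s, w i * l i) = ∑ i ∈ s, w i * lagrangian a b κ d (l i) := by
  have hterm : ∀ i, w i * lagrangian a b κ d (l i) = w i * a d - w i * l i * (b d - κ) :=
    fun i => by simp only [lagrangian]; ring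
  rw [sum_congr rfl fun i _ => hterm i, sum_sub_distrib, ← sum_mul, ← sum_mul, hw, one_mul]
  rfl

theorem lagrangian_sub_le_mul_abs {d : E} {H : ℝ} (hd : |b d - κ| ≤ H) (l₁ l₂ : ℝ) :
    lagrangian a b κ d l₁ - lagrangian a b κ d l₂ ≤ H * |l₁ - l₂| :=
  calc lagrangian a b κ d l₁ - lagrangian a b κ d l₂ = (l₂ - l₁) * (b d - κ) := by
        simp only [lagrangian]; ring
    _ ≤ |l₁ - l₂| * |b d - κ| := by rw [abs_sub_comm, ← abs_mul]; exact le_abs_self _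
    _ ≤ H * |l₁ - l₂| := by rw [mul_comm]; exact mul_le_mul_of_nonneg_right hd (abs_nonneg _)

theorem lagrangian_sum_mul_le_of_forall_le (s : Finset ι) {w : ι → ℝ}
    (hw₀ : ∀ i ∈ s, 0 ≤ w i) (hw₁ : ∑ i ∈ s, w i = 1) {d : E} {D : ι → E} {l : ι → ℝ} {ε : ℝ}
    (h : ∀ i ∈ s, lagrangian a b κ d (l i) ≤ lagrangian a b κ (D i) (l i) + ε) :
    lagrangian a b κ d (∑ i ∈ s, w i * l i) ≤
      ∑ i ∈ s, w i * lagrangian a b κ (D i) (l i) + ε := by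
  rw [lagrangian_sum_mul a b κ s hw₁]
  calc ∑ i ∈ s, w i * lagrangian a b κ d (l i)
      ≤ ∑ i ∈ s, w i * (lagrangian a b κ (D i) (l i) + ε) :=
        sum_le_sum fun i hi => mul_le_mul_of_nonneg_left (h i hi) (hw₀ i hi)
    _ = ∑ i ∈ s, w i * lagrangian a b κ (D i) (l i) + ε := by
        simp only [mul_add, sum_add_distrib, ← sum_mul, hw₁, one_mul]

end Lagrangian

theorem Real.inv_mul_sqrt_mul {T : ℝ} (hT : 0 < T) (x : ℝ) : T⁻¹ * √(T * x) = √(x / T) := by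
  have hx : T * x = T ^ 2 * (x / T) := by field_simp
  rw [hx, Real.sqrt_mul (sq_nonneg T), Real.sqrt_sq hT.le, inv_mul_cancel_left₀ hT.ne']

theorem o3srl_exp3_approx_equilibrium_general
    {E : Type*} [AddCommGroup E] [Module ℝ E]
    (S : Set E) (hSconv : Convex ℝ S)
    (a b : E →ₗ[ℝ] ℝ) (κ : ℝ)
    (L : E → ℝ → ℝ) (hL : ∀ d lam, L d lam = a d - lam * (b d - κ))
    (C : ℝ)
    (K T : ℕ) (hT : 0 < T)
    (ΛK : Set ℝ)
    (H : ℝ) (hHb : ∀ d ∈ S, |b d - κ| ≤ H)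
    (εoff : ℝ)
    (D : Fin T → E) (hD : ∀ t, D t ∈ S)
    (lam : Fin T → ℝ)
    (horacle : ∀ t : Fin T, ∀ d ∈ S, L d (lam t) ≤ L (D t) (lam t) + εoff)
    (hregret : ∀ l ∈ ΛK,
      ∑ t, L (D t) (lam t) ≤ ∑ t, L (D t) l + H * Real.sqrt (2 * T * K * Real.log K))
    (Dbar : E) (hDbar : Dbar = ((T : ℝ))⁻¹ • ∑ t, D t)
    (lamhat : ℝ) (hlamhat : lamhat = ((T : ℝ))⁻¹ * ∑ t, lam t)
    (lambar : ℝ) (hlambar : lambar ∈ ΛK) (hclose : |lambar - lamhat| ≤ C / K) :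
    Dbar ∈ S ∧ lambar ∈ ΛK ∧
      ∀ d ∈ S, ∀ l ∈ ΛK,
        L d lambar - (εoff + H * Real.sqrt (2 * K * Real.log K / T) + 2 * H * C / K)
            ≤ L Dbar lambar ∧
        L Dbar lambar
            ≤ L Dbar l + (εoff + H * Real.sqrt (2 * K * Real.log K / T) + 2 * H * C / K) := by
  obtain rfl : L = lagrangian a b κ := funext fun d => funext (hL d)
  have hT' : (0 : ℝ) < T := Nat.cast_pos.2 hT
  have hw₀ : ∀ _t ∈ (univ : Finset (Fin T)), 0 ≤ (T : ℝ)⁻¹ := fun _ _ => by positivity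
  have hw₁ : ∑ _t : Fin T, (T : ℝ)⁻¹ = 1 := by simp [hT'.ne']
  rw [smul_sum] at hDbar
  rw [mul_sum] at hlamhat
  have hDbar_mem : Dbar ∈ S := hDbar ▸ hSconv.sum_mem hw₀ hw₁ fun t _ => hD t
  have hH : 0 ≤ H := (abs_nonneg _).trans (hHb _ hDbar_mem)
  set V := ∑ t, (T : ℝ)⁻¹ * lagrangian a b κ (D t) (lam t)
  have hbest (d : E) (hd : d ∈ S) : lagrangian a b κ d lamhat ≤ V + εoff :=
    hlamhat ▸ lagrangian_sum_mul_le_of_forall_le a b κ univ hw₀ hw₁ fun t _ => horacle t d hd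
  have hrate : (T : ℝ)⁻¹ * (H * √(2 * T * K * Real.log K)) = H * √(2 * K * Real.log K / T) := by
    rw [mul_left_comm, ← Real.inv_mul_sqrt_mul hT']
    ring_nf
  have hnoregret (l : ℝ) (hl : l ∈ ΛK) :
      V ≤ lagrangian a b κ Dbar l + H * √(2 * K * Real.log K / T) := by
    have := mul_le_mul_of_nonneg_left (hregret l hl) (inv_nonneg.2 hT'.le)
    rwa [mul_add, mul_sum, mul_sum, hrate, ← lagrangian_sum_smul a b κ univ hw₁, ← hDbar] at this
  have hrounding (d : E) (hd : d ∈ S) :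
      lagrangian a b κ d lambar ≤ lagrangian a b κ d lamhat + H * (C / K) := by
    have := lagrangian_sub_le_mul_abs a b κ (hHb d hd) lambar lamhat
    linarith [mul_le_mul_of_nonneg_left hclose hH]
  have hslack : 0 ≤ H * (C / K) := mul_nonneg hH ((abs_nonneg _).trans hclose)
  refine ⟨hDbar_mem, hlambar, fun d hd l hl => ⟨?_, ?_⟩⟩
  · linarith [hrounding d hd, hbest d hd, hnoregret lambar hlambar, mul_div_assoc (2 * H) C K]
  · linarith [hrounding _ hDbar_mem, hbest _ hDbar_mem, hnoregret l hl,
      mul_div_assoc (2 * H) C K]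

/-- The discretized O3SRL algorithm (EXP3 over K arms) returns an
ε-approximate minimax equilibrium with ε = ε_off + H·√(2·K·ln K / T) + 2·H·C/K. -/
theorem o3srl_exp3_approx_equilibrium
    {E : Type*} [AddCommGroup E] [Module ℝ E]
    (S : Set E) (hS : S.Nonempty) (hSconv : Convex ℝ S)
    (a b : E →ₗ[ℝ] ℝ) (κ : ℝ)
    (L : E → ℝ → ℝ) (hL : ∀ d lam, L d lam = a d - lam * (b d - κ))
    (C : ℝ) (hC : 0 < C)
    (K T : ℕ) (hK : 2 ≤ K) (hT : 0 < T)
    (ΛK : Set ℝ) (hΛK : ΛK = {x : ℝ | ∃ i : Fin K, x = (i : ℝ) * C / K})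
    (H : ℝ) (hH : 0 < H) (hHb : ∀ d ∈ S, |b d - κ| ≤ H)
    (εoff : ℝ) (hεoff : 0 ≤ εoff)
    (D : Fin T → E) (hD : ∀ t, D t ∈ S)
    (lam : Fin T → ℝ) (hlam : ∀ t, lam t ∈ ΛK)
    (horacle : ∀ t : Fin T, ∀ d ∈ S, L d (lam t) ≤ L (D t) (lam t) + εoff)
    (hregret : ∀ l ∈ ΛK,
      ∑ t, L (D t) (lam t) ≤ ∑ t, L (D t) l + H * Real.sqrt (2 * T * K * Real.log K))
    (Dbar : E) (hDbar : Dbar = ((T : ℝ))⁻¹ • ∑ t, D t)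
    (lamhat : ℝ) (hlamhat : lamhat = ((T : ℝ))⁻¹ * ∑ t, lam t)
    (lambar : ℝ) (hlambar : lambar ∈ ΛK) (hclose : |lambar - lamhat| ≤ C / K) :
    Dbar ∈ S ∧ lambar ∈ ΛK ∧
      ∀ d ∈ S, ∀ l ∈ ΛK,
        L d lambar - (εoff + H * Real.sqrt (2 * K * Real.log K / T) + 2 * H * C / K)
            ≤ L Dbar lambar ∧
        L Dbar lambar
            ≤ L Dbar l + (εoff + H * Real.sqrt (2 * K * Real.log K / T) + 2 * H * C / K) :=
  o3srl_exp3_approx_equilibrium_general S hSconv a b κ L hL C K T hT ΛK H hHb εoff D hD lam horacle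
    hregret Dbar hDbar lamhat hlamhat lambar hlambar hclose
end

section
/- Let C > 0, let K and T be positive integers with K ≥ 2, and let ε_off ≥ 0. Suppose D₁,…,D_T ∈ S and λ₁,…,λ_T ∈ Λ_K satisfy: (i) for every t ∈ {1,…,T} and every D ∈ S, L(D, λ_t) ≤ L(D_t, λ_t) + ε_off; and (ii) for every λ ∈ Λ_K, ∑_{t=1}^T L(D_t, λ_t) ≤ ∑_{t=1}^T L(D_t, λ) + H·√(2·T·K·ln K), where H > 0. Set D̄ = (1/T)·∑_{t=1}^T D_t and λ̂ = (1/T)·∑_{t=1}^T λ_t (note λ̂ lies in the convex hull [0, (K−1)·C/K] of Λ_K but need not lie in Λ_K). Then with ε₁ = ε_off + H·√(2·K·ln K / T): for every D ∈ S, L(D, λ̂) ≤ L(D̄, λ̂) + ε₁, and for every λ ∈ Λ_K, L(D̄, λ̂) ≤ L(D̄, λ) + ε₁. -/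
/-!
Both inequalities come from one averaging argument. Since `L` is affine in each variable,
averaging over the rounds commutes with `L` in either slot: `∑ₜ L(d, λₜ) = T·L(d, λ̂)` and
`∑ₜ L(Dₜ, λ) = T·L(D̄, λ)`. Summing the oracle inequality at any `d ∈ S` and feeding in the
regret bound against a comparator `λ` gives `L(d, λ̂) ≤ L(D̄, λ) + ε_off + R/T`, with
`R = H·√(2TK ln K)`, so `R/T = H·√(2K ln K / T)`. Taking `λ ∈ Λ_K` and `d = D̄ ∈ S` gives the
second claim; taking `λ = λ̂` gives the first, once the regret bound is known at `λ̂`. That holds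
because `λ ↦ ∑ₜ L(Dₜ, λ)` is affine and `λ̂` lies between the grid points `0` and `(K-1)C/K`.
-/

open Finset

lemma Real.sqrt_mul_div_self {t : ℝ} (ht : 0 < t) (x : ℝ) : √(t * x) / t = √(x / t) :=
  calc √(t * x) / t = √(t * x) / √(t ^ 2) := by rw [Real.sqrt_sq ht.le]
    _ = √(t * x / t ^ 2) := (Real.sqrt_div' _ (sq_nonneg t)).symm
    _ = √(x / t) := by congr 1; field_simp

lemma Convex.inv_natCast_smul_sum_mem {E : Type*} [AddCommGroup E] [Module ℝ E] {s : Set E}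
    (hs : Convex ℝ s) {T : ℕ} (hT : 0 < T) {x : Fin T → E} (hx : ∀ t, x t ∈ s) :
    (T : ℝ)⁻¹ • ∑ t, x t ∈ s := by
  rw [smul_sum]
  refine hs.sum_mem (fun _ _ => by positivity) ?_ (fun t _ => hx t)
  simp [hT.ne']

lemma le_sub_mul_of_mem_Icc {c p q M x : ℝ} (h₀ : c ≤ p) (hM : c ≤ p - M * q)
    (hx : x ∈ Set.Icc 0 M) : c ≤ p - x * q := by
  obtain ⟨hx₀, hxM⟩ := hx
  rcases le_total 0 q with hq | hq
  · nlinarith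
  · nlinarith

def multiplierGrid (C : ℝ) (K : ℕ) : Set ℝ := {x : ℝ | ∃ i : Fin K, x = (i : ℝ) * C / K}

section multiplierGrid

variable {C : ℝ} {K : ℕ}

lemma zero_mem_multiplierGrid (hK : 0 < K) : (0 : ℝ) ∈ multiplierGrid C K :=
  ⟨⟨0, hK⟩, by simp⟩

lemma top_mem_multiplierGrid (hK : 0 < K) : ((K : ℝ) - 1) * C / K ∈ multiplierGrid C K :=
  ⟨⟨K - 1, Nat.sub_lt hK one_pos⟩, by simp [Nat.cast_pred hK]⟩

lemma multiplierGrid_subset_Icc (hC : 0 ≤ C) :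
    multiplierGrid C K ⊆ Set.Icc 0 (((K : ℝ) - 1) * C / K) := by
  rintro x ⟨i, rfl⟩
  have hi : (i : ℝ) ≤ K - 1 := by
    rw [le_sub_iff_add_le]
    exact_mod_cast i.isLt
  exact ⟨by positivity, by gcongr⟩

end multiplierGrid

section Lagrangian

variable {E : Type*} [AddCommGroup E] [Module ℝ E] {a b : E →ₗ[ℝ] ℝ} {κ : ℝ}
  {L : E → ℝ → ℝ} {T : ℕ}

lemma sum_lagrangian_eq (hL : ∀ d l, L d l = a d - l * (b d - κ)) (D : Fin T → E) (l : ℝ) :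
    ∑ t, L (D t) l = ∑ t, a (D t) - l * ∑ t, (b (D t) - κ) := by
  rw [mul_sum, ← sum_sub_distrib]
  exact sum_congr rfl fun t _ => hL _ _

lemma sum_lagrangian_eq_mul_mean_fst (hL : ∀ d l, L d l = a d - l * (b d - κ)) (hT : 0 < T)
    (D : Fin T → E) (l : ℝ) :
    ∑ t, L (D t) l = T * L ((T : ℝ)⁻¹ • ∑ t, D t) l := by
  rw [sum_lagrangian_eq hL, hL]
  simp only [map_smul, map_sum, smul_eq_mul, sum_sub_distrib, sum_const, card_univ,
    Fintype.card_fin, nsmul_eq_mul]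
  field_simp

lemma sum_lagrangian_eq_mul_mean_snd (hL : ∀ d l, L d l = a d - l * (b d - κ)) (hT : 0 < T)
    (d : E) (lam : Fin T → ℝ) :
    ∑ t, L d (lam t) = T * L d ((T : ℝ)⁻¹ * ∑ t, lam t) := by
  simp only [hL, sum_sub_distrib, sum_const, card_univ, Fintype.card_fin, nsmul_eq_mul,
    ← sum_mul]
  field_simp

lemma sum_lagrangian_le_of_mem_Icc (hL : ∀ d l, L d l = a d - l * (b d - κ)) (D : Fin T → E)
    {c R M x : ℝ} (h₀ : c ≤ ∑ t, L (D t) 0 + R) (hM : c ≤ ∑ t, L (D t) M + R)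
    (hx : x ∈ Set.Icc 0 M) : c ≤ ∑ t, L (D t) x + R := by
  simp only [sum_lagrangian_eq hL, sub_add_eq_add_sub _ _ R, zero_mul, sub_zero] at h₀ hM ⊢
  exact le_sub_mul_of_mem_Icc h₀ hM hx

lemma lagrangian_mean_le_of_regret (hL : ∀ d l, L d l = a d - l * (b d - κ)) (hT : 0 < T)
    {S : Set E} {D : Fin T → E} {lam : Fin T → ℝ} {ε R : ℝ}
    (horacle : ∀ t, ∀ d ∈ S, L d (lam t) ≤ L (D t) (lam t) + ε) {d : E} (hd : d ∈ S) {l : ℝ}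
    (hregret : ∑ t, L (D t) (lam t) ≤ ∑ t, L (D t) l + R) :
    L d ((T : ℝ)⁻¹ * ∑ t, lam t) ≤ L ((T : ℝ)⁻¹ • ∑ t, D t) l + (ε + R / T) := by
  have hT' : (0 : ℝ) < T := Nat.cast_pos.mpr hT
  refine le_of_mul_le_mul_left ?_ hT'
  calc T * L d ((T : ℝ)⁻¹ * ∑ t, lam t) = ∑ t, L d (lam t) :=
        (sum_lagrangian_eq_mul_mean_snd hL hT d lam).symm
    _ ≤ ∑ t, (L (D t) (lam t) + ε) := sum_le_sum fun t _ => horacle t d hd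
    _ = ∑ t, L (D t) (lam t) + T * ε := by simp [sum_add_distrib]
    _ ≤ ∑ t, L (D t) l + R + T * ε := by linarith
    _ = T * (L ((T : ℝ)⁻¹ • ∑ t, D t) l + (ε + R / T)) := by
        rw [sum_lagrangian_eq_mul_mean_fst hL hT]
        field_simp
        ring

end Lagrangian

theorem o3srl_exp3_intermediate_general
    {E : Type*} [AddCommGroup E] [Module ℝ E]
    (S : Set E) (hSconv : Convex ℝ S)
    (a b : E →ₗ[ℝ] ℝ) (κ : ℝ)
    (L : E → ℝ → ℝ) (hL : ∀ d lam, L d lam = a d - lam * (b d - κ))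
    (C : ℝ) (hC : 0 < C)
    (K T : ℕ) (hK : 2 ≤ K) (hT : 0 < T)
    (ΛK : Set ℝ) (hΛK : ΛK = {x : ℝ | ∃ i : Fin K, x = (i : ℝ) * C / K})
    (H : ℝ)
    (εoff : ℝ)
    (D : Fin T → E) (hD : ∀ t, D t ∈ S)
    (lam : Fin T → ℝ) (hlam : ∀ t, lam t ∈ ΛK)
    (horacle : ∀ t : Fin T, ∀ d ∈ S, L d (lam t) ≤ L (D t) (lam t) + εoff)
    (hregret : ∀ l ∈ ΛK,
      ∑ t, L (D t) (lam t) ≤ ∑ t, L (D t) l + H * Real.sqrt (2 * T * K * Real.log K))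
    (Dbar : E) (hDbar : Dbar = ((T : ℝ))⁻¹ • ∑ t, D t)
    (lamhat : ℝ) (hlamhat : lamhat = ((T : ℝ))⁻¹ * ∑ t, lam t) :
    (∀ d ∈ S, L d lamhat ≤ L Dbar lamhat + (εoff + H * Real.sqrt (2 * K * Real.log K / T))) ∧
    (∀ l ∈ ΛK, L Dbar lamhat ≤ L Dbar l + (εoff + H * Real.sqrt (2 * K * Real.log K / T))) := by
  change ΛK = multiplierGrid C K at hΛK
  subst hΛK hDbar hlamhat
  have hK₀ : 0 < K := by omega
  have hDbar_mem : (T : ℝ)⁻¹ • ∑ t, D t ∈ S := hSconv.inv_natCast_smul_sum_mem hT hD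
  have hlamhat_mem : (T : ℝ)⁻¹ * ∑ t, lam t ∈ Set.Icc 0 (((K : ℝ) - 1) * C / K) :=
    (convex_Icc _ _).inv_natCast_smul_sum_mem hT fun t => multiplierGrid_subset_Icc hC.le (hlam t)
  have hregret_lamhat := sum_lagrangian_le_of_mem_Icc hL D
    (hregret 0 (zero_mem_multiplierGrid hK₀)) (hregret _ (top_mem_multiplierGrid hK₀))
    hlamhat_mem
  have hR : H * √(2 * T * K * Real.log K) / T = H * √(2 * K * Real.log K / T) := by
    rw [mul_div_assoc, show (2 : ℝ) * T * K * Real.log K = T * (2 * K * Real.log K) by ring,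
      Real.sqrt_mul_div_self (Nat.cast_pos.mpr hT)]
  rw [← hR]
  exact ⟨fun d hd => lagrangian_mean_le_of_regret hL hT horacle hd hregret_lamhat,
    fun l hl => lagrangian_mean_le_of_regret hL hT horacle hDbar_mem (hregret l hl)⟩

/-- Intermediate guarantee for the discretized algorithm at the
(possibly non-discretized) average multiplier λ̂, with ε₁ = ε_off + H·√(2·K·ln K / T). -/
theorem o3srl_exp3_intermediate
    {E : Type*} [AddCommGroup E] [Module ℝ E]
    (S : Set E) (hS : S.Nonempty) (hSconv : Convex ℝ S)
    (a b : E →ₗ[ℝ] ℝ) (κ : ℝ)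
    (L : E → ℝ → ℝ) (hL : ∀ d lam, L d lam = a d - lam * (b d - κ))
    (C : ℝ) (hC : 0 < C)
    (K T : ℕ) (hK : 2 ≤ K) (hT : 0 < T)
    (ΛK : Set ℝ) (hΛK : ΛK = {x : ℝ | ∃ i : Fin K, x = (i : ℝ) * C / K})
    (H : ℝ) (hH : 0 < H)
    (εoff : ℝ) (hεoff : 0 ≤ εoff)
    (D : Fin T → E) (hD : ∀ t, D t ∈ S)
    (lam : Fin T → ℝ) (hlam : ∀ t, lam t ∈ ΛK)
    (horacle : ∀ t : Fin T, ∀ d ∈ S, L d (lam t) ≤ L (D t) (lam t) + εoff)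
    (hregret : ∀ l ∈ ΛK,
      ∑ t, L (D t) (lam t) ≤ ∑ t, L (D t) l + H * Real.sqrt (2 * T * K * Real.log K))
    (Dbar : E) (hDbar : Dbar = ((T : ℝ))⁻¹ • ∑ t, D t)
    (lamhat : ℝ) (hlamhat : lamhat = ((T : ℝ))⁻¹ * ∑ t, lam t) :
    (∀ d ∈ S, L d lamhat ≤ L Dbar lamhat + (εoff + H * Real.sqrt (2 * K * Real.log K / T))) ∧
    (∀ l ∈ ΛK, L Dbar lamhat ≤ L Dbar l + (εoff + H * Real.sqrt (2 * K * Real.log K / T))) :=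
  o3srl_exp3_intermediate_general S hSconv a b κ L hL C hC K T hK hT ΛK hΛK H εoff D hD lam hlam
    horacle hregret Dbar hDbar lamhat hlamhat
end
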